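/- arXiv:1501.05536 — 3 statements merged into one kernel-verified Lean document; each statement's English description precedes it below -/
import Mathlib

section
/- Let t be a binary tree on leaf set S with |S| = n ≥ 4, let a, b, c ∈ S be distinct, and let x_{ij} = 2^{n−2−l(i,j)}. If neither {a,b} nor {b,c} is a cherry of t, then x_{ab} + x_{bc} − x_{ac} < 2^{n−3}. -/
/-- A binary tree with `n` labeled leaves: a tree on `2*n - 2` vertices in which every
vertex has degree 1 or 3, with the degree-1 vertices (leaves) bijectively labeled by `Fin n`. -/
structure BTree (n : ℕ) where
  G : SimpleGraph (Fin (2 * n - 2))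
  isTree : G.IsTree
  deg : ∀ v, (G.neighborSet v).ncard = 1 ∨ (G.neighborSet v).ncard = 3
  leaf : Fin n → Fin (2 * n - 2)
  leafDeg : ∀ i, (G.neighborSet (leaf i)).ncard = 1
  leafInj : Function.Injective leaf
  leafSurj : ∀ v, (G.neighborSet v).ncard = 1 → ∃ i, leaf i = v

/-- The number of internal vertices on the path between leaves `i` and `j`
(the path has `dist + 1` vertices, of which two are the endpoints). -/
noncomputable def BTree.l {n : ℕ} (t : BTree n) (i j : Fin n) : ℕ :=
  t.G.dist (t.leaf i) (t.leaf j) - 1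

/-- The scaled BME coordinate `x_{ij} = 2 ^ (n - 2 - l(i,j))`. -/
noncomputable def BTree.x {n : ℕ} (t : BTree n) (i j : Fin n) : ℕ :=
  2 ^ (n - 2 - t.l i j)

/-- `{i, j}` is a cherry: the path between the two leaves contains exactly one internal vertex. -/
def BTree.IsCherry {n : ℕ} (t : BTree n) (i j : Fin n) : Prop :=
  i ≠ j ∧ t.l i j = 1

/-- Label-preserving isomorphism of labeled binary trees. -/
def TreeIso {n : ℕ} (t t' : BTree n) : Prop :=
  ∃ e : t.G ≃g t'.G, ∀ i, e (t.leaf i) = t'.leaf i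

lemma walk_stuck {V : Type*} {G : SimpleGraph V} {u w : V}
    (hu : G.neighborSet u = {w}) (hw : G.neighborSet w = {u}) :
    ∀ {s v : V}, G.Walk s v → s ∈ ({u, w} : Set V) → v ∈ ({u, w} : Set V) := by
  intro s v p
  induction p with
  | nil => exact id
  | @cons s x v h p ih =>
    intro hs
    apply ih
    rcases hs with rfl | rfl
    · right; have : x ∈ G.neighborSet s := h; rw [hu] at this; exact this
    · left; have : x ∈ G.neighborSet s := h; rw [hw] at this; exact this

lemma leaf_not_adj {n : ℕ} (hn : 4 ≤ n) (t : BTree n) (i j : Fin n) :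
    ¬ t.G.Adj (t.leaf i) (t.leaf j) := by
  intro hadj
  set u := t.leaf i
  set w := t.leaf j
  obtain ⟨x, hx⟩ := Set.ncard_eq_one.mp (t.leafDeg i)
  have hxw : x = w := by
    have : w ∈ t.G.neighborSet u := hadj
    rw [hx] at this; exact this.symm
  subst hxw
  obtain ⟨y, hy⟩ := Set.ncard_eq_one.mp (t.leafDeg j)
  have hyu : y = u := by
    have : u ∈ t.G.neighborSet w := hadj.symm
    rw [hy] at this; exact this.symm
  subst hyu
  -- there exists a vertex outside {u, w}
  have hcard : 6 ≤ 2 * n - 2 := by omega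
  have hex : ∃ v : Fin (2 * n - 2), v ∉ ({u, w} : Set (Fin (2 * n - 2))) := by
    by_contra hall
    push_neg at hall
    have huniv : (Set.univ : Set (Fin (2 * n - 2))) = {u, w} := by
      ext v; simp [hall v]
    have h1 : (Set.univ : Set (Fin (2 * n - 2))).ncard = 2 * n - 2 := by
      rw [Set.ncard_univ]; simp
    have h2 : ({u, w} : Set (Fin (2 * n - 2))).ncard ≤ 2 := by
      apply le_trans (Set.ncard_insert_le _ _)
      simp
    rw [huniv, ] at h1
    omega
  obtain ⟨v, hv⟩ := hex
  obtain ⟨p⟩ := t.isTree.isConnected.preconnected u v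
  exact hv (walk_stuck hx hy p (by left; rfl))

lemma l_ge_two {n : ℕ} (hn : 4 ≤ n) (t : BTree n) {i j : Fin n}
    (hij : i ≠ j) (hnc : ¬ t.IsCherry i j) : 2 ≤ t.l i j := by
  have hne : t.leaf i ≠ t.leaf j := fun h => hij (t.leafInj h)
  have hd1 : t.G.dist (t.leaf i) (t.leaf j) ≠ 1 := by
    intro h
    exact leaf_not_adj hn t i j (SimpleGraph.dist_eq_one_iff_adj.mp h)
  have hdpos : 0 < t.G.dist (t.leaf i) (t.leaf j) :=
    t.isTree.isConnected.pos_dist_of_ne hne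
  have hd2 : t.G.dist (t.leaf i) (t.leaf j) ≠ 2 := by
    intro h
    exact hnc ⟨hij, by unfold BTree.l; omega⟩
  unfold BTree.l
  omega

/-- If neither `{a,b}` nor `{b,c}` is a cherry of `t`, then
`x_{ab} + x_{bc} - x_{ac} < 2^(n-3)` (the intersecting-cherry facet inequality). -/
theorem intersecting_cherry_inequality (n : ℕ) (hn : 4 ≤ n) (t : BTree n) (a b c : Fin n)
    (hab : a ≠ b) (hbc : b ≠ c) (hac : a ≠ c)
    (h1 : ¬ t.IsCherry a b) (h2 : ¬ t.IsCherry b c) :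
    (t.x a b : ℤ) + (t.x b c : ℤ) - (t.x a c : ℤ) < 2 ^ (n - 3) := by
  have hxab : t.x a b ≤ 2 ^ (n - 4) := by
    apply Nat.pow_le_pow_right (by norm_num)
    have := l_ge_two hn t hab h1
    omega
  have hxbc : t.x b c ≤ 2 ^ (n - 4) := by
    apply Nat.pow_le_pow_right (by norm_num)
    have := l_ge_two hn t hbc h2
    omega
  have hxac : 1 ≤ t.x a c := Nat.one_le_two_pow
  have hsum : (2 : ℤ) ^ (n - 4) + 2 ^ (n - 4) = 2 ^ (n - 3) := by
    have : n - 3 = (n - 4) + 1 := by omega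
    rw [this, pow_succ]; ring
  have h1' : (t.x a b : ℤ) ≤ 2 ^ (n - 4) := by exact_mod_cast hxab
  have h2' : (t.x b c : ℤ) ≤ 2 ^ (n - 4) := by exact_mod_cast hxbc
  have h3' : (1 : ℤ) ≤ t.x a c := by exact_mod_cast hxac
  linarith
end

section
/- Let t be a binary tree on leaf set S with |S| = n ≥ 4, let a, b ∈ S be distinct, and let x_{ab} = 2^{n−2−l(a,b)}. Then x_{ab} = 1 if and only if t is a caterpillar with a and b lying in its two distinct cherries; and x_{ab} > 1 otherwise. Hence x_{ab} ≥ 1 holds for all binary trees, with equality exactly on the caterpillar facet. -/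
open SimpleGraph Set

private lemma dist_add_of_mem_support {V : Type*} [DecidableEq V] {G : SimpleGraph V} (hG : G.Connected)
    {a b v : V} (p : G.Walk a b) (hp : p.length = G.dist a b) (hv : v ∈ p.support) :
    G.dist a v + G.dist v b = G.dist a b := by
  have hq := SimpleGraph.dist_le (p.takeUntil v hv)
  have hr := SimpleGraph.dist_le (p.dropUntil v hv)
  have hlen : (p.takeUntil v hv).length + (p.dropUntil v hv).length = p.length := by
    have := congrArg SimpleGraph.Walk.length (p.take_spec hv)
    rwa [SimpleGraph.Walk.length_append] at this
  have htri := hG.dist_triangle (u := a) (v := v) (w := b)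
  omega

private lemma two_le_deg_of_interior {V : Type*} [Fintype V] [DecidableEq V] {G : SimpleGraph V}
    {a b v : V} (p : G.Walk a b) (hp : p.IsPath) (hv : v ∈ p.support)
    (hva : v ≠ a) (hvb : v ≠ b) : 1 < (G.neighborSet v).ncard := by
  classical
  set q := p.takeUntil v hv with hq
  set r := p.dropUntil v hv with hr
  have hspec : q.append r = p := p.take_spec hv
  have hqnil : ¬ q.reverse.Nil := SimpleGraph.Walk.not_nil_of_ne hva
  have hrnil : ¬ r.Nil := SimpleGraph.Walk.not_nil_of_ne hvb
  set n1 := q.reverse.getVert 1 with hn1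
  set n2 := r.getVert 1 with hn2
  have ha1 : G.Adj v n1 := SimpleGraph.Walk.adj_snd hqnil
  have ha2 : G.Adj v n2 := SimpleGraph.Walk.adj_snd hrnil
  have hm1 : n1 ∈ q.support := by
    have hl : 0 < q.reverse.length := SimpleGraph.Walk.not_nil_iff_lt_length.mp hqnil
    have : n1 ∈ q.reverse.support :=
      SimpleGraph.Walk.mem_support_iff_exists_getVert.mpr ⟨1, rfl, hl⟩
    rwa [SimpleGraph.Walk.support_reverse, List.mem_reverse] at this
  have hm2 : n2 ∈ r.support.tail := by
    have hl : 0 < r.length := SimpleGraph.Walk.not_nil_iff_lt_length.mp hrnil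
    have h2 : n2 ∈ r.support :=
      SimpleGraph.Walk.mem_support_iff_exists_getVert.mpr ⟨1, rfl, hl⟩
    rw [r.support_eq_cons] at h2
    rcases List.mem_cons.mp h2 with h | h
    · exact absurd h.symm ha2.ne
    · exact h
  have hnodup : (q.support ++ r.support.tail).Nodup := by
    have := hp.support_nodup
    rwa [← hspec, SimpleGraph.Walk.support_append] at this
  have hne : n1 ≠ n2 := by
    intro h
    exact (List.disjoint_of_nodup_append hnodup) hm1 (h ▸ hm2)
  rw [Set.one_lt_ncard (Set.toFinite _)]
  exact ⟨n1, ha1, n2, ha2, hne⟩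


/-- `t` is a caterpillar with `a` and `b` in its two end cherries: every internal
vertex lies on the path from leaf `a` to leaf `b`. -/
def BTree.CaterpillarEnds {n : ℕ} (t : BTree n) (a b : Fin n) : Prop :=
  ∀ v, (t.G.neighborSet v).ncard = 3 →
    t.G.dist (t.leaf a) v + t.G.dist v (t.leaf b) = t.G.dist (t.leaf a) (t.leaf b)

/-- `x_{ab} = 1` iff `t` is a caterpillar with `a` and `b` in its two distinct
cherries, and `x_{ab} > 1` otherwise; in particular `x_{ab} ≥ 1` always. -/
theorem caterpillar_facet_inequality (n : ℕ) (hn : 4 ≤ n) (t : BTree n) (a b : Fin n)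
    (hab : a ≠ b) :
    1 ≤ t.x a b ∧ (t.x a b = 1 ↔ t.CaterpillarEnds a b) ∧
      (¬ t.CaterpillarEnds a b → 1 < t.x a b) := by
  classical
  have hconn : t.G.Connected := t.isTree.isConnected
  set la := t.leaf a with hla
  set lb := t.leaf b with hlb
  have hne : la ≠ lb := fun h => hab (t.leafInj h)
  obtain ⟨P, hP⟩ := hconn.exists_walk_length_eq_dist la lb
  have hPpath : P.IsPath := P.isPath_of_length_eq_dist hP
  set d := t.G.dist la lb with hd
  have hd1 : 1 ≤ d := (hconn.preconnected la lb).pos_dist_of_ne hne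
  set I : Set (Fin (2 * n - 2)) := {v | (t.G.neighborSet v).ncard = 3} with hIdef
  have hIcompl : I = (Set.range t.leaf)ᶜ := by
    ext v
    simp only [hIdef, Set.mem_setOf_eq, Set.mem_compl_iff, Set.mem_range]
    constructor
    · rintro h3 ⟨i, rfl⟩
      have := t.leafDeg i
      omega
    · intro hnl
      rcases t.deg v with h | h
      · exact absurd (t.leafSurj v h) hnl
      · exact h
  have hrange : (Set.range t.leaf).ncard = n := by
    rw [← Set.image_univ, Set.ncard_image_of_injective _ t.leafInj, Set.ncard_univ]
    simp
  have hcard : Nat.card (Fin (2 * n - 2)) = 2 * n - 2 := by simp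
  have hI : I.ncard = n - 2 := by
    have h := Set.ncard_add_ncard_compl (Set.range t.leaf)
    rw [hrange, hcard, ← hIcompl] at h
    omega
  set SS : Set (Fin (2 * n - 2)) := {v | v ∈ P.support} with hSSdef
  have hSS : SS.ncard = d + 1 := by
    have hfs : SS = (P.support.toFinset : Set _) := by ext v; simp [hSSdef]
    rw [hfs, Set.ncard_coe_finset, List.toFinset_card_of_nodup hPpath.support_nodup,
      SimpleGraph.Walk.length_support, hP]
  set J := SS \ {la, lb} with hJdef
  have hpairS : ({la, lb} : Set _) ⊆ SS := by
    intro v hv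
    rcases hv with rfl | hv
    · exact P.start_mem_support
    · rw [Set.mem_singleton_iff] at hv
      subst hv
      exact P.end_mem_support
  have hJ : J.ncard = d - 1 := by
    rw [hJdef, Set.ncard_diff hpairS, Set.ncard_pair hne, hSS]
    omega
  have hJI : J ⊆ I := by
    rintro v ⟨hvS, hvp⟩
    simp only [Set.mem_insert_iff, Set.mem_singleton_iff, not_or] at hvp
    have h2 := two_le_deg_of_interior P hPpath hvS hvp.1 hvp.2
    rcases t.deg v with h | h
    · omega
    · exact h
  have hle : d - 1 ≤ n - 2 := by
    have h := Set.ncard_le_ncard hJI (Set.toFinite I)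
    omega
  have hiff : d - 1 = n - 2 ↔ t.CaterpillarEnds a b := by
    constructor
    · intro heq
      have hJeq : J = I :=
        Set.eq_of_subset_of_ncard_le hJI (by omega) (Set.toFinite I)
      intro v hv3
      have hvJ : v ∈ J := by rw [hJeq]; exact hv3
      exact dist_add_of_mem_support hconn P hP hvJ.1
    · intro hcat
      have hIJ : I ⊆ J := by
        intro v hv3
        have hv3' : (t.G.neighborSet v).ncard = 3 := hv3
        have hva : v ≠ la := by
          rintro rfl
          have := t.leafDeg a
          rw [← hla] at this
          omega
        have hvb : v ≠ lb := by
          rintro rfl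
          have := t.leafDeg b
          rw [← hlb] at this
          omega
        have hvS : v ∈ SS := by
          obtain ⟨Q, hQ⟩ := hconn.exists_walk_length_eq_dist la v
          obtain ⟨R, hR⟩ := hconn.exists_walk_length_eq_dist v lb
          have hlen : (Q.append R).length = d := by
            rw [SimpleGraph.Walk.length_append, hQ, hR]
            exact hcat v hv3'
          have hWpath : (Q.append R).IsPath :=
            (Q.append R).isPath_of_length_eq_dist (by rw [hlen])
          have heqP : Q.append R = P :=
            (t.isTree.existsUnique_path la lb).unique hWpath hPpath
          have hvW : v ∈ (Q.append R).support := by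
            rw [SimpleGraph.Walk.mem_support_append_iff]
            exact Or.inl Q.end_mem_support
          rw [heqP] at hvW
          exact hvW
        exact ⟨hvS, by simp [hva, hvb]⟩
      have h := Set.ncard_le_ncard hIJ (Set.toFinite J)
      omega
  have hx : t.x a b = 2 ^ (n - 2 - (d - 1)) := rfl
  refine ⟨Nat.one_le_two_pow, ?_, ?_⟩
  · rw [hx]
    constructor
    · intro h1
      have h0 : n - 2 - (d - 1) = 0 := by
        by_contra h
        have := Nat.one_lt_two_pow_iff.mpr h
        omega
      exact hiff.mp (by omega)
    · intro hc
      rw [← hiff] at hc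
      rw [hc]
      simp
  · intro hnc
    rw [hx]
    have hne2 : d - 1 ≠ n - 2 := fun h => hnc (hiff.mp h)
    have h0 : 0 < n - 2 - (d - 1) := by omega
    calc 1 < 2 ^ 1 := by norm_num
      _ ≤ 2 ^ (n - 2 - (d - 1)) := Nat.pow_le_pow_right (by norm_num) h0
end

section
/- Let t be a binary tree on a 5-element leaf set {a,b,c,d,f} with scaled coordinates x_{ij} = 2^{3−l(i,j)}. If t is planar-compatible with the cyclic ordering (a,b,c,d,f) (i.e., t can be drawn in the plane with its leaves in this cyclic order on a circle), then x_{ab} + x_{bc} + x_{cd} + x_{df} + x_{fa} = 13; otherwise this sum is at most 12. -/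
/-- `i` and `j` are adjacent in the cyclic ordering `(0,1,2,3,4)` of `Fin 5`. -/
def CycAdj (i j : Fin 5) : Prop := j = i + 1 ∨ i = j + 1

/-- `t` is planar-compatible with the cyclic ordering `(0,1,2,3,4)`:
every cherry of `t` is a cyclically adjacent pair. -/
def PlanarCompat (t : BTree 5) : Prop := ∀ i j : Fin 5, t.IsCherry i j → CycAdj i j


open SimpleGraph

lemma walk_closed {V : Type*} {G : SimpleGraph V} (S : Set V)
    (hcl : ∀ a ∈ S, ∀ b, G.Adj a b → b ∈ S) :
    ∀ {a b : V}, G.Walk a b → a ∈ S → b ∈ S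
  | _, _, .nil, ha => ha
  | _, _, .cons h q, ha => walk_closed S hcl q (hcl _ ha _ h)

lemma closed_all {V : Type*} {G : SimpleGraph V} (hc : G.Connected) (S : Set V)
    {a : V} (ha : a ∈ S) (hcl : ∀ a ∈ S, ∀ b, G.Adj a b → b ∈ S) : ∀ v, v ∈ S := by
  intro v
  obtain ⟨p⟩ := hc.preconnected a v
  exact walk_closed S hcl p ha

lemma extra2 : ∀ a b : Fin (2*5-2), ∃ c, c ≠ a ∧ c ≠ b := by decide
lemma extra4 : ∀ a b c d : Fin (2*5-2), ∃ e, e ≠ a ∧ e ≠ b ∧ e ≠ c ∧ e ≠ d := by decide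

namespace BTree

variable (t : BTree 5)

lemma exists_nb (i : Fin 5) : ∃ u, t.G.neighborSet (t.leaf i) = {u} :=
  Set.ncard_eq_one.mp (t.leafDeg i)

noncomputable def nb (i : Fin 5) : Fin (2*5-2) := (t.exists_nb i).choose

lemma nbSet (i : Fin 5) : t.G.neighborSet (t.leaf i) = {t.nb i} :=
  (t.exists_nb i).choose_spec

lemma adj_nb (i : Fin 5) : t.G.Adj (t.leaf i) (t.nb i) := by
  have : t.nb i ∈ t.G.neighborSet (t.leaf i) := by rw [t.nbSet i]; rfl
  exact this

lemma adj_leaf_eq_nb {i : Fin 5} {v : Fin (2*5-2)} (h : t.G.Adj (t.leaf i) v) :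
    v = t.nb i := by
  have : v ∈ t.G.neighborSet (t.leaf i) := h
  rwa [t.nbSet i] at this

-- the neighbor of a leaf is internal
lemma nb_deg (i : Fin 5) : (t.G.neighborSet (t.nb i)).ncard = 3 := by
  rcases t.deg (t.nb i) with h1 | h3
  · exfalso
    obtain ⟨u, hu⟩ := Set.ncard_eq_one.mp h1
    have hlu : t.leaf i ∈ t.G.neighborSet (t.nb i) := (t.adj_nb i).symm
    rw [hu] at hlu
    have hu' : u = t.leaf i := hlu.symm
    subst hu'
    set S : Set (Fin (2*5-2)) := {t.leaf i, t.nb i} with hS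
    have hall := closed_all t.isTree.isConnected S (a := t.leaf i) (by left; rfl) ?_
    · obtain ⟨c, hc1, hc2⟩ := extra2 (t.leaf i) (t.nb i)
      rcases hall c with h | h
      · exact hc1 h
      · exact hc2 h
    · rintro a (rfl | rfl) b hb
      · right; exact (t.adj_leaf_eq_nb hb) ▸ rfl
      · left
        have : b ∈ t.G.neighborSet (t.nb i) := hb
        rw [hu] at this
        exact this
  · exact h3

lemma leaf_ne_nb (i j : Fin 5) : t.leaf i ≠ t.nb j := by
  intro h
  have := t.leafDeg i
  rw [h, t.nb_deg j] at this
  omega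

-- at most two leaves attach to a vertex
lemma fiber_le_two {i j k : Fin 5} (hij : i ≠ j) (hik : i ≠ k) (hjk : j ≠ k)
    (h1 : t.nb j = t.nb i) (h2 : t.nb k = t.nb i) : False := by
  set z := t.nb i with hz
  have hNz : t.G.neighborSet z ⊆ {t.leaf i, t.leaf j, t.leaf k} := by
    have hsub : ({t.leaf i, t.leaf j, t.leaf k} : Set (Fin (2*5-2))) ⊆ t.G.neighborSet z := by
      rintro v (rfl | rfl | rfl)
      · exact (t.adj_nb i).symm
      · rw [h1.symm]; exact (t.adj_nb j).symm
      · rw [h2.symm]; exact (t.adj_nb k).symm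
    have heq := Set.eq_of_subset_of_ncard_le hsub ?_ (Set.toFinite _)
    · rw [heq]
    · rw [t.nb_deg i]
      have d1 : t.leaf i ≠ t.leaf j := fun h => hij (t.leafInj h)
      have d2 : t.leaf i ≠ t.leaf k := fun h => hik (t.leafInj h)
      have d3 : t.leaf j ≠ t.leaf k := fun h => hjk (t.leafInj h)
      rw [Set.ncard_insert_of_notMem (by simp [d1, d2]) (Set.toFinite _),
        Set.ncard_insert_of_notMem (by simp [d3]) (Set.toFinite _), Set.ncard_singleton]
  set S : Set (Fin (2*5-2)) := {z, t.leaf i, t.leaf j, t.leaf k} with hS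
  have hall := closed_all t.isTree.isConnected S (a := z) (by left; rfl) ?_
  · obtain ⟨e, he1, he2, he3, he4⟩ := extra4 z (t.leaf i) (t.leaf j) (t.leaf k)
    rcases hall e with h | h | h | h
    · exact he1 h
    · exact he2 h
    · exact he3 h
    · exact he4 h
  · rintro a (rfl | rfl | rfl | rfl) b hb
    · rcases hNz hb with h | h | h
      · right; left; exact h
      · right; right; left; exact h
      · right; right; right; exact h
    · left; exact (t.adj_leaf_eq_nb hb) ▸ rfl
    · left; rw [t.adj_leaf_eq_nb hb, h1]
    · left; rw [t.adj_leaf_eq_nb hb, h2]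


-- internal vertices
lemma internal_classify (v : Fin (2*5-2)) :
    (t.G.neighborSet v).ncard = 3 ∨ ∃ i, t.leaf i = v := by
  rcases t.deg v with h | h
  · exact Or.inr (t.leafSurj v h)
  · exact Or.inl h

lemma internal_card :
    {v : Fin (2*5-2) | (t.G.neighborSet v).ncard = 3}.ncard = 3 := by
  have hcompl : {v : Fin (2*5-2) | (t.G.neighborSet v).ncard = 3} = (Set.range t.leaf)ᶜ := by
    ext v
    simp only [Set.mem_setOf_eq, Set.mem_compl_iff, Set.mem_range]
    constructor
    · rintro h ⟨i, rfl⟩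
      rw [t.leafDeg i] at h; omega
    · intro h
      rcases t.internal_classify v with h3 | ⟨i, hi⟩
      · exact h3
      · exact absurd ⟨i, hi⟩ h
  have hrange : (Set.range t.leaf).ncard = 5 := by
    rw [Set.ncard_eq_toFinset_card', Set.toFinset_range]
    rw [Finset.card_image_of_injective _ t.leafInj]
    simp
  have := Set.ncard_add_ncard_compl (Set.range t.leaf)
  have h8 : Nat.card (Fin (2*5-2)) = 8 := by simp [Nat.card_eq_fintype_card]
  rw [hrange, h8] at this
  rw [hcompl]
  omega

-- distance lemmas
lemma dist_ge_two {i j : Fin 5} (hij : i ≠ j) :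
    2 ≤ t.G.dist (t.leaf i) (t.leaf j) := by
  have hne : t.leaf i ≠ t.leaf j := fun h => hij (t.leafInj h)
  have h0 : 0 < t.G.dist (t.leaf i) (t.leaf j) :=
    t.isTree.isConnected.pos_dist_of_ne hne
  have h1 : t.G.dist (t.leaf i) (t.leaf j) ≠ 1 := by
    intro h
    have hadj : t.G.Adj (t.leaf i) (t.leaf j) := SimpleGraph.dist_eq_one_iff_adj.mp h
    have := t.adj_leaf_eq_nb hadj
    exact t.leaf_ne_nb j i this
  omega

lemma dist_le (i j : Fin 5) :
    t.G.dist (t.leaf i) (t.leaf j) ≤ 2 + t.G.dist (t.nb i) (t.nb j) := by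
  have hc := t.isTree.isConnected
  have h1 := hc.dist_triangle (u := t.leaf i) (v := t.nb i) (w := t.leaf j)
  have h2 := hc.dist_triangle (u := t.nb i) (v := t.nb j) (w := t.leaf j)
  have e1 : t.G.dist (t.leaf i) (t.nb i) = 1 :=
    SimpleGraph.dist_eq_one_iff_adj.mpr (t.adj_nb i)
  have e2 : t.G.dist (t.nb j) (t.leaf j) = 1 :=
    SimpleGraph.dist_eq_one_iff_adj.mpr (t.adj_nb j).symm
  omega

lemma dist_ne_two {i j : Fin 5} (h : t.nb i ≠ t.nb j) :
    t.G.dist (t.leaf i) (t.leaf j) ≠ 2 := by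
  intro h2
  obtain ⟨p, hp⟩ := SimpleGraph.exists_walk_of_dist_ne_zero (by omega :
    t.G.dist (t.leaf i) (t.leaf j) ≠ 0)
  rw [h2] at hp
  have a1 := p.adj_getVert_succ (i := 0) (by omega)
  have a2 := p.adj_getVert_succ (i := 1) (by omega)
  rw [p.getVert_zero] at a1
  have hend : p.getVert 2 = t.leaf j := by
    have := p.getVert_length; rwa [hp] at this
  rw [hend] at a2
  have e1 : p.getVert 1 = t.nb i := t.adj_leaf_eq_nb a1
  have e2 : p.getVert 1 = t.nb j := t.adj_leaf_eq_nb a2.symm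
  exact h (e1 ▸ e2)

lemma dist_eq_two {i j : Fin 5} (hij : i ≠ j) (h : t.nb i = t.nb j) :
    t.G.dist (t.leaf i) (t.leaf j) = 2 := by
  have hle := t.dist_le i j
  have : t.G.dist (t.nb i) (t.nb j) = 0 := by rw [h, SimpleGraph.dist_self]
  have hge := t.dist_ge_two hij
  omega

lemma nb_ne_of_adj {i j : Fin 5} (h : t.G.Adj (t.nb i) (t.nb j)) : i ≠ j := by
  rintro rfl; exact t.G.irrefl h

lemma dist_eq_three {i j : Fin 5} (h : t.G.Adj (t.nb i) (t.nb j)) :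
    t.G.dist (t.leaf i) (t.leaf j) = 3 := by
  have hij := t.nb_ne_of_adj h
  have hle := t.dist_le i j
  have h1 : t.G.dist (t.nb i) (t.nb j) = 1 := SimpleGraph.dist_eq_one_iff_adj.mpr h
  have hge := t.dist_ge_two hij
  have hne2 := t.dist_ne_two (i := i) (j := j) h.ne
  omega

lemma dist_eq_four {i j : Fin 5} (hij : i ≠ j) (hne : t.nb i ≠ t.nb j)
    (hnadj : ¬ t.G.Adj (t.nb i) (t.nb j)) {c : Fin (2*5-2)}
    (h1 : t.G.Adj (t.nb i) c) (h2 : t.G.Adj c (t.nb j)) :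
    t.G.dist (t.leaf i) (t.leaf j) = 4 := by
  have hle := t.dist_le i j
  have hd2 : t.G.dist (t.nb i) (t.nb j) ≤ 2 := by
    have hc := t.isTree.isConnected
    have h3 := hc.dist_triangle (u := t.nb i) (v := c) (w := t.nb j)
    have e1 : t.G.dist (t.nb i) c = 1 := SimpleGraph.dist_eq_one_iff_adj.mpr h1
    have e2 : t.G.dist c (t.nb j) = 1 := SimpleGraph.dist_eq_one_iff_adj.mpr h2
    omega
  have hge := t.dist_ge_two hij
  have hne2 := t.dist_ne_two (i := i) (j := j) hne
  have hne3 : t.G.dist (t.leaf i) (t.leaf j) ≠ 3 := by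
    intro h3
    obtain ⟨p, hp⟩ := SimpleGraph.exists_walk_of_dist_ne_zero (by omega :
      t.G.dist (t.leaf i) (t.leaf j) ≠ 0)
    rw [h3] at hp
    have a1 := p.adj_getVert_succ (i := 0) (by omega)
    have a2 := p.adj_getVert_succ (i := 1) (by omega)
    have a3 := p.adj_getVert_succ (i := 2) (by omega)
    rw [p.getVert_zero] at a1
    have hend : p.getVert 3 = t.leaf j := by
      have := p.getVert_length; rwa [hp] at this
    rw [hend] at a3
    have e1 : p.getVert 1 = t.nb i := t.adj_leaf_eq_nb a1
    have e2 : p.getVert 2 = t.nb j := t.adj_leaf_eq_nb a3.symm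
    rw [e1, e2] at a2
    exact hnadj a2
  omega

lemma fiber_card_le_two (z : Fin (2*5-2)) :
    (Finset.univ.filter (fun i => t.nb i = z)).card ≤ 2 := by
  by_contra h
  push_neg at h
  obtain ⟨s, hs, hcard⟩ := Finset.exists_subset_card_eq (by omega :
    3 ≤ (Finset.univ.filter (fun i => t.nb i = z)).card)
  obtain ⟨i, j, k, hij, hik, hjk, rfl⟩ := Finset.card_eq_three.mp hcard
  have hi' : t.nb i = z := (Finset.mem_filter.mp (hs (by simp))).2
  have hj' : t.nb j = z := (Finset.mem_filter.mp (hs (by simp))).2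
  have hk' : t.nb k = z := (Finset.mem_filter.mp (hs (by simp))).2
  exact t.fiber_le_two hij hik hjk (hj'.trans hi'.symm) (hk'.trans hi'.symm)

lemma buildG (a b c : Fin (2*5-2)) (hab : a ≠ b) (hac : a ≠ c) (hbc : b ≠ c)
    (hI : ∀ v, (t.G.neighborSet v).ncard = 3 → v = a ∨ v = b ∨ v = c)
    (hFa : (Finset.univ.filter (fun i => t.nb i = a)).card = 2)
    (hFb : (Finset.univ.filter (fun i => t.nb i = b)).card = 2)
    (hFc : (Finset.univ.filter (fun i => t.nb i = c)).card = 1) :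
    ∃ g : Fin 5 → Fin 3,
      ((Finset.univ.filter (fun i => g i = 0)).card = 2 ∧
       (Finset.univ.filter (fun i => g i = 1)).card = 2 ∧
       (Finset.univ.filter (fun i => g i = 2)).card = 1) ∧
      ∀ i j, i ≠ j → t.G.dist (t.leaf i) (t.leaf j) =
        (if g i = g j then 2 else if g i = 2 ∨ g j = 2 then 3 else 4) := by
  -- witnesses that a, b are neighbors of leaves
  have hwa : ∃ ja, t.nb ja = a := by
    have : (Finset.univ.filter (fun i => t.nb i = a)).Nonempty := by
      rw [← Finset.card_pos, hFa]; omega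
    obtain ⟨ja, hja⟩ := this
    exact ⟨ja, (Finset.mem_filter.mp hja).2⟩
  have hwb : ∃ jb, t.nb jb = b := by
    have : (Finset.univ.filter (fun i => t.nb i = b)).Nonempty := by
      rw [← Finset.card_pos, hFb]; omega
    obtain ⟨jb, hjb⟩ := this
    exact ⟨jb, (Finset.mem_filter.mp hjb).2⟩
  obtain ⟨ja, hja⟩ := hwa
  obtain ⟨jb, hjb⟩ := hwb
  -- the unique middle leaf
  obtain ⟨m, hm⟩ := Finset.card_eq_one.mp hFc
  have hmc : t.nb m = c := by
    have hmm : m ∈ Finset.univ.filter (fun i => t.nb i = c) := by rw [hm]; simp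
    exact (Finset.mem_filter.mp hmm).2
  have hmuniq : ∀ j, t.nb j = c → j = m := by
    intro j hj
    have : j ∈ Finset.univ.filter (fun i => t.nb i = c) := by simp [hj]
    rw [hm] at this; simpa using this
  have hmem : ∀ i, t.nb i = a ∨ t.nb i = b ∨ t.nb i = c := fun i => hI _ (t.nb_deg i)
  -- degrees of a b c
  have hdega : (t.G.neighborSet a).ncard = 3 := hja ▸ t.nb_deg ja
  have hdegb : (t.G.neighborSet b).ncard = 3 := hjb ▸ t.nb_deg jb
  have hdegc : (t.G.neighborSet c).ncard = 3 := hmc ▸ t.nb_deg m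
  have hlma : t.leaf m ≠ a := hja ▸ t.leaf_ne_nb m ja
  have hlmb : t.leaf m ≠ b := hjb ▸ t.leaf_ne_nb m jb
  -- N c = {leaf m, a, b}
  have hNc : t.G.neighborSet c = {t.leaf m, a, b} := by
    have hsub : t.G.neighborSet c ⊆ {t.leaf m, a, b} := by
      intro v hv
      have hadj : t.G.Adj c v := hv
      rcases t.internal_classify v with h3 | ⟨j, rfl⟩
      · rcases hI v h3 with rfl | rfl | rfl
        · right; left; rfl
        · right; right; rfl
        · exact absurd rfl hadj.ne'
      · have h1 : c = t.nb j := t.adj_leaf_eq_nb hadj.symm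
        have h2 := hmuniq j h1.symm
        subst h2
        left; rfl
    have hcard : ({t.leaf m, a, b} : Set (Fin (2*5-2))).ncard ≤ (t.G.neighborSet c).ncard := by
      rw [hdegc, Set.ncard_insert_of_notMem (by simp [hlma, hlmb]) (Set.toFinite _),
        Set.ncard_insert_of_notMem (by simp [hab]) (Set.toFinite _), Set.ncard_singleton]
    exact Set.eq_of_subset_of_ncard_le hsub hcard (Set.toFinite _)
  have hca : t.G.Adj c a := by
    have : a ∈ t.G.neighborSet c := by rw [hNc]; right; left; rfl
    exact this
  have hcb : t.G.Adj c b := by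
    have : b ∈ t.G.neighborSet c := by rw [hNc]; right; right; rfl
    exact this
  -- N a and non-adjacency of a b
  have hnab : ¬ t.G.Adj a b := by
    obtain ⟨i1, i2, h12, hFa'⟩ := Finset.card_eq_two.mp hFa
    have hi1 : t.nb i1 = a := by
      have : i1 ∈ Finset.univ.filter (fun i => t.nb i = a) := by rw [hFa']; simp
      exact (Finset.mem_filter.mp this).2
    have hi2 : t.nb i2 = a := by
      have : i2 ∈ Finset.univ.filter (fun i => t.nb i = a) := by rw [hFa']; simp
      exact (Finset.mem_filter.mp this).2
    have hNa : t.G.neighborSet a = {t.leaf i1, t.leaf i2, c} := by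
      have hsub : ({t.leaf i1, t.leaf i2, c} : Set (Fin (2*5-2))) ⊆ t.G.neighborSet a := by
        rintro v (rfl | rfl | rfl)
        · exact hi1 ▸ (t.adj_nb i1).symm
        · exact hi2 ▸ (t.adj_nb i2).symm
        · exact hca.symm
      have h12' : t.leaf i1 ≠ t.leaf i2 := fun h => h12 (t.leafInj h)
      have hl1c : t.leaf i1 ≠ c := hmc ▸ t.leaf_ne_nb i1 m
      have hl2c : t.leaf i2 ≠ c := hmc ▸ t.leaf_ne_nb i2 m
      have hcard : (t.G.neighborSet a).ncard ≤
          ({t.leaf i1, t.leaf i2, c} : Set (Fin (2*5-2))).ncard := by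
        rw [hdega, Set.ncard_insert_of_notMem (by simp [h12', hl1c]) (Set.toFinite _),
          Set.ncard_insert_of_notMem (by simp [hl2c]) (Set.toFinite _), Set.ncard_singleton]
      exact (Set.eq_of_subset_of_ncard_le hsub hcard (Set.toFinite _)).symm
    intro hadj
    have : b ∈ t.G.neighborSet a := hadj
    rw [hNa] at this
    rcases this with h | h | h
    · exact t.leaf_ne_nb i1 jb (h.symm.trans hjb.symm)
    · exact t.leaf_ne_nb i2 jb (h.symm.trans hjb.symm)
    · exact hbc h
  -- define the coloring
  refine ⟨fun i => if t.nb i = a then 0 else if t.nb i = b then 1 else 2, ⟨?_, ?_, ?_⟩, ?_⟩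
  · refine Eq.trans (congrArg Finset.card (Finset.filter_congr ?_)) hFa
    intro i _
    rcases hmem i with h | h | h <;>
      simp [h, hab, hab.symm, hac, hac.symm, hbc, hbc.symm]
  · refine Eq.trans (congrArg Finset.card (Finset.filter_congr ?_)) hFb
    intro i _
    rcases hmem i with h | h | h <;>
      simp [h, hab, hab.symm, hac, hac.symm, hbc, hbc.symm]
  · refine Eq.trans (congrArg Finset.card (Finset.filter_congr ?_)) hFc
    intro i _
    rcases hmem i with h | h | h <;>
      simp [h, hab, hab.symm, hac, hac.symm, hbc, hbc.symm]
  · intro i j hij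
    beta_reduce
    have ev : ∀ k : Fin 5, t.nb k = a →
        (if t.nb k = a then (0:Fin 3) else if t.nb k = b then 1 else 2) = 0 := by
      intro k h; simp [h]
    have ev2 : ∀ k : Fin 5, t.nb k = b →
        (if t.nb k = a then (0:Fin 3) else if t.nb k = b then 1 else 2) = 1 := by
      intro k h; simp [h, hab.symm]
    have ev3 : ∀ k : Fin 5, t.nb k = c →
        (if t.nb k = a then (0:Fin 3) else if t.nb k = b then 1 else 2) = 2 := by
      intro k h; simp [h, hac.symm, hbc.symm]
    rcases hmem i with hi | hi | hi <;> rcases hmem j with hj | hj | hj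
    · rw [ev i hi, ev j hj, if_pos rfl]; exact t.dist_eq_two hij (hi.trans hj.symm)
    · rw [ev i hi, ev2 j hj, if_neg (by decide), if_neg (by decide)]
      exact t.dist_eq_four hij (by rw [hi, hj]; exact hab)
        (by rw [hi, hj]; exact hnab) (hi ▸ hca.symm) (hj ▸ hcb)
    · rw [ev i hi, ev3 j hj, if_neg (by decide), if_pos (by decide)]
      exact t.dist_eq_three (by rw [hi, hj]; exact hca.symm)
    · rw [ev2 i hi, ev j hj, if_neg (by decide), if_neg (by decide)]
      exact t.dist_eq_four hij (by rw [hi, hj]; exact hab.symm)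
        (by rw [hi, hj]; exact fun h => hnab h.symm) (hi ▸ hcb.symm) (hj ▸ hca)
    · rw [ev2 i hi, ev2 j hj, if_pos rfl]; exact t.dist_eq_two hij (hi.trans hj.symm)
    · rw [ev2 i hi, ev3 j hj, if_neg (by decide), if_pos (by decide)]
      exact t.dist_eq_three (by rw [hi, hj]; exact hcb.symm)
    · rw [ev3 i hi, ev j hj, if_neg (by decide), if_pos (by decide)]
      exact t.dist_eq_three (by rw [hi, hj]; exact hca)
    · rw [ev3 i hi, ev2 j hj, if_neg (by decide), if_pos (by decide)]
      exact t.dist_eq_three (by rw [hi, hj]; exact hcb)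
    · rw [ev3 i hi, ev3 j hj, if_pos rfl]; exact t.dist_eq_two hij (hi.trans hj.symm)

lemma struct : ∃ g : Fin 5 → Fin 3,
    ((Finset.univ.filter (fun i => g i = 0)).card = 2 ∧
     (Finset.univ.filter (fun i => g i = 1)).card = 2 ∧
     (Finset.univ.filter (fun i => g i = 2)).card = 1) ∧
    ∀ i j, i ≠ j → t.G.dist (t.leaf i) (t.leaf j) =
      (if g i = g j then 2 else if g i = 2 ∨ g j = 2 then 3 else 4) := by
  obtain ⟨x, y, z, hxy, hxz, hyz, hIs⟩ := Set.ncard_eq_three.mp t.internal_card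
  have hI : ∀ v, (t.G.neighborSet v).ncard = 3 → v = x ∨ v = y ∨ v = z := by
    intro v hv
    have : v ∈ {v : Fin (2*5-2) | (t.G.neighborSet v).ncard = 3} := hv
    rw [hIs] at this
    simpa using this
  have hmem : ∀ i, t.nb i = x ∨ t.nb i = y ∨ t.nb i = z := fun i => hI _ (t.nb_deg i)
  set Fx := Finset.univ.filter (fun i => t.nb i = x) with hFx
  set Fy := Finset.univ.filter (fun i => t.nb i = y) with hFy
  set Fz := Finset.univ.filter (fun i => t.nb i = z) with hFz
  have hdisj1 : Disjoint Fy Fz := by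
    rw [Finset.disjoint_left]
    intro i hi1 hi2
    rw [hFy, Finset.mem_filter] at hi1
    rw [hFz, Finset.mem_filter] at hi2
    exact hyz (hi1.2 ▸ hi2.2)
  have hdisj2 : Disjoint Fx (Fy ∪ Fz) := by
    rw [Finset.disjoint_left]
    intro i hi1 hi2
    rw [hFx, Finset.mem_filter] at hi1
    rcases Finset.mem_union.mp hi2 with h | h
    · rw [hFy, Finset.mem_filter] at h
      exact hxy (hi1.2 ▸ h.2)
    · rw [hFz, Finset.mem_filter] at h
      exact hxz (hi1.2 ▸ h.2)
  have huniv : Fx ∪ (Fy ∪ Fz) = Finset.univ := by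
    ext i
    simp only [Finset.mem_union, Finset.mem_univ, iff_true, hFx, hFy, hFz, Finset.mem_filter,
      true_and]
    rcases hmem i with h | h | h <;> tauto
  have hsum : Fx.card + Fy.card + Fz.card = 5 := by
    have h1 : (Fx ∪ (Fy ∪ Fz)).card = Fx.card + (Fy.card + Fz.card) := by
      rw [Finset.card_union_of_disjoint hdisj2, Finset.card_union_of_disjoint hdisj1]
    rw [huniv] at h1
    simp at h1
    omega
  have bx := t.fiber_card_le_two x
  have by' := t.fiber_card_le_two y
  have bz := t.fiber_card_le_two z
  rw [← hFx] at bx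
  rw [← hFy] at by'
  rw [← hFz] at bz
  have hcases : (Fx.card = 1 ∧ Fy.card = 2 ∧ Fz.card = 2) ∨
      (Fy.card = 1 ∧ Fx.card = 2 ∧ Fz.card = 2) ∨
      (Fz.card = 1 ∧ Fx.card = 2 ∧ Fy.card = 2) := by omega
  rcases hcases with ⟨h1, h2, h3⟩ | ⟨h1, h2, h3⟩ | ⟨h1, h2, h3⟩
  · exact t.buildG y z x hyz hxy.symm hxz.symm (fun v hv => by rcases hI v hv with h|h|h <;> tauto)
      h2 h3 h1
  · exact t.buildG x z y hxz hxy hyz.symm (fun v hv => by rcases hI v hv with h|h|h <;> tauto)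
      h2 h3 h1
  · exact t.buildG x y z hxy hxz hyz (fun v hv => by rcases hI v hv with h|h|h <;> tauto)
      h2 h3 h1

end BTree

instance : ∀ i j : Fin 5, Decidable (CycAdj i j) := fun i j => by
  unfold CycAdj; infer_instance

def sx (g : Fin 5 → Fin 3) (i j : Fin 5) : ℕ :=
  if g i = g j then 4 else if g i = 2 ∨ g j = 2 then 2 else 1

set_option maxRecDepth 4000 in
lemma keyDecide : ∀ g : Fin 5 → Fin 3,
    (Finset.univ.filter (fun i => g i = 0)).card = 2 →
    (Finset.univ.filter (fun i => g i = 1)).card = 2 →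
    (Finset.univ.filter (fun i => g i = 2)).card = 1 →
    (((∀ i j : Fin 5, i ≠ j → g i = g j → CycAdj i j) →
        sx g 0 1 + sx g 1 2 + sx g 2 3 + sx g 3 4 + sx g 4 0 = 13) ∧
      (¬ (∀ i j : Fin 5, i ≠ j → g i = g j → CycAdj i j) →
        sx g 0 1 + sx g 1 2 + sx g 2 3 + sx g 3 4 + sx g 4 0 ≤ 12)) := by decide


/-- A binary tree on 5 leaves planar-compatible with the cyclic order `(a,b,c,d,f)`
satisfies `x_{ab} + x_{bc} + x_{cd} + x_{df} + x_{fa} = 13`; otherwise the sum is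
at most `12`. -/
theorem cyclic_ordering_inequality (t : BTree 5) :
    (PlanarCompat t → t.x 0 1 + t.x 1 2 + t.x 2 3 + t.x 3 4 + t.x 4 0 = 13) ∧
    (¬ PlanarCompat t → t.x 0 1 + t.x 1 2 + t.x 2 3 + t.x 3 4 + t.x 4 0 ≤ 12) := by
  obtain ⟨g, ⟨c0, c1, c2⟩, hdist⟩ := t.struct
  have hx : ∀ i j : Fin 5, i ≠ j → t.x i j = sx g i j := by
    intro i j hij
    have hd := hdist i j hij
    show 2 ^ (5 - 2 - (t.G.dist (t.leaf i) (t.leaf j) - 1)) = _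
    by_cases h1 : g i = g j
    · rw [if_pos h1] at hd
      rw [hd]
      norm_num [sx, h1]
    · rw [if_neg h1] at hd
      by_cases h2 : g i = 2 ∨ g j = 2
      · rw [if_pos h2] at hd
        rw [hd]
        norm_num [sx, h1, h2]
      · rw [if_neg h2] at hd
        rw [hd]
        norm_num [sx, h1, h2]
  have hcherry : ∀ i j, t.IsCherry i j ↔ (i ≠ j ∧ g i = g j) := by
    intro i j
    constructor
    · rintro ⟨hij, hl⟩
      refine ⟨hij, ?_⟩
      by_contra h1
      have hd := hdist i j hij
      rw [if_neg h1] at hd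
      have hl' : t.G.dist (t.leaf i) (t.leaf j) - 1 = 1 := hl
      by_cases h2 : g i = 2 ∨ g j = 2
      · rw [if_pos h2] at hd; omega
      · rw [if_neg h2] at hd; omega
    · rintro ⟨hij, hg⟩
      refine ⟨hij, ?_⟩
      have hd := hdist i j hij
      rw [if_pos hg] at hd
      show t.G.dist (t.leaf i) (t.leaf j) - 1 = 1
      omega
  have hPiff : PlanarCompat t ↔ ∀ i j : Fin 5, i ≠ j → g i = g j → CycAdj i j := by
    constructor
    · intro hpc i j hij hg
      exact hpc i j ((hcherry i j).mpr ⟨hij, hg⟩)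
    · intro h i j hch
      obtain ⟨hij, hg⟩ := (hcherry i j).mp hch
      exact h i j hij hg
  constructor
  · intro hpc
    rw [hx 0 1 (by decide), hx 1 2 (by decide), hx 2 3 (by decide), hx 3 4 (by decide),
      hx 4 0 (by decide)]
    exact (keyDecide g c0 c1 c2).1 (hPiff.mp hpc)
  · intro hnpc
    rw [hx 0 1 (by decide), hx 1 2 (by decide), hx 2 3 (by decide), hx 3 4 (by decide),
      hx 4 0 (by decide)]
    exact (keyDecide g c0 c1 c2).2 (fun h => hnpc (hPiff.mpr h))
end
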